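/- Suppose λ_* ∈ Λ and c_* > 0 satisfy Θ(λ_*, c_*) = f_*, axioms (A1), (A2), (A3), (A7) hold, and the function c ↦ Φ(y,λ_*,c) is strictly increasing on its effective domain for every y ∉ K and on the set {c : -∞ < Φ(y,λ_*,c) < 0} for every y ∈ K. Then for every c > c_*(λ_*), a point x ∈ Q attains the infimum inf_{x∈Q} 𝓛(x,λ_*,c) if and only if x is a globally optimal solution of the primal problem. -/

import Mathlib

/-! For `c > c_*(λ_*)` pick a dual optimal `c' < c`; weak duality (from (A1)) and (A7) give
`Θ(λ_*, c') = Θ(λ_*, c) = f_*`. A minimizer `x` of `𝓛(·, λ_*, c)` then also minimizes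
`𝓛(·, λ_*, c')`, so `Φ(G x, λ_*, ·)` is finite and constant on `[c', c]`. Strict monotonicity
rules this out unless `G x ∈ K` and `Φ(G x, λ_*, c) = 0`, whence `f x = f_*`. Conversely, for a
primal solution `x`, (A1) gives `𝓛(x, λ_*, c) ≤ f x = f_* = Θ(λ_*, c)`. -/

open Filter Topology Metric Set

noncomputable section

variable {X Y : Type*} [NormedAddCommGroup X] [NormedSpace ℝ X]
  [NormedAddCommGroup Y] [NormedSpace ℝ Y]

/-- Augmented Lagrangian `𝓛(x, λ, c) = f(x) + Φ(G(x), λ, c)`. -/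
def lagr (f : X → EReal) (G : X → Y) (Φ : Y → (Y →L[ℝ] ℝ) → ℝ → EReal)
    (x : X) (l : Y →L[ℝ] ℝ) (c : ℝ) : EReal :=
  f x + Φ (G x) l c

/-- Augmented dual function `Θ(λ, c) = inf_{x ∈ Q} 𝓛(x, λ, c)`. -/
def theta (Q : Set X) (f : X → EReal) (G : X → Y)
    (Φ : Y → (Y →L[ℝ] ℝ) → ℝ → EReal) (l : Y →L[ℝ] ℝ) (c : ℝ) : EReal :=
  ⨅ x ∈ Q, lagr f G Φ x l c

/-- Optimal value of the primal problem `min f(x) s.t. G(x) ∈ K, x ∈ Q`. -/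
def primalVal (Q : Set X) (K : Set Y) (f : X → EReal) (G : X → Y) : EReal :=
  ⨅ x ∈ {x ∈ Q | G x ∈ K}, f x

/-- Optimal value of the dual problem `max Θ(λ, c) over λ ∈ Λ, c > 0`. -/
def dualVal (Q : Set X) (Λ : Set (Y →L[ℝ] ℝ)) (f : X → EReal) (G : X → Y)
    (Φ : Y → (Y →L[ℝ] ℝ) → ℝ → EReal) : EReal :=
  ⨆ l ∈ Λ, ⨆ c ∈ Ioi (0 : ℝ), theta Q f G Φ l c

/-- `(l, c)` is a globally optimal solution of the dual problem. -/
def DualOpt (Q : Set X) (Λ : Set (Y →L[ℝ] ℝ)) (f : X → EReal) (G : X → Y)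
    (Φ : Y → (Y →L[ℝ] ℝ) → ℝ → EReal) (l : Y →L[ℝ] ℝ) (c : ℝ) : Prop :=
  l ∈ Λ ∧ 0 < c ∧ ∀ l' ∈ Λ, ∀ c' > (0 : ℝ), theta Q f G Φ l' c' ≤ theta Q f G Φ l c

/-- The saddle point inequalities hold for every `c ≥ c₀`. -/
def SaddleFrom (Q : Set X) (Λ : Set (Y →L[ℝ] ℝ)) (f : X → EReal) (G : X → Y)
    (Φ : Y → (Y →L[ℝ] ℝ) → ℝ → EReal) (x₀ : X) (l₀ : Y →L[ℝ] ℝ) (c₀ : ℝ) : Prop :=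
  ∀ c ≥ c₀, (⨆ l ∈ Λ, lagr f G Φ x₀ l c) ≤ lagr f G Φ x₀ l₀ c ∧
    lagr f G Φ x₀ l₀ c ≤ (⨅ x ∈ Q, lagr f G Φ x l₀ c) ∧
    (⨅ x ∈ Q, lagr f G Φ x l₀ c) < ⊤

/-- `(x₀, l₀)` is a global saddle point of the augmented Lagrangian. -/
def SaddlePt (Q : Set X) (Λ : Set (Y →L[ℝ] ℝ)) (f : X → EReal) (G : X → Y)
    (Φ : Y → (Y →L[ℝ] ℝ) → ℝ → EReal) (x₀ : X) (l₀ : Y →L[ℝ] ℝ) : Prop :=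
  x₀ ∈ Q ∧ l₀ ∈ Λ ∧ ∃ c₀ > (0 : ℝ), SaddleFrom Q Λ f G Φ x₀ l₀ c₀

/-- The least exact penalty parameter `c_*(x₀, l₀)` of a global saddle point. -/
def saddleCStar (Q : Set X) (Λ : Set (Y →L[ℝ] ℝ)) (f : X → EReal) (G : X → Y)
    (Φ : Y → (Y →L[ℝ] ℝ) → ℝ → EReal) (x₀ : X) (l₀ : Y →L[ℝ] ℝ) : ℝ :=
  sInf {c₀ : ℝ | 0 < c₀ ∧ SaddleFrom Q Λ f G Φ x₀ l₀ c₀}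

/-- `x₀` is a globally optimal solution of the primal problem. -/
def PrimalOpt (Q : Set X) (K : Set Y) (f : X → EReal) (G : X → Y) (x₀ : X) : Prop :=
  x₀ ∈ Q ∧ G x₀ ∈ K ∧ ∀ x ∈ Q, G x ∈ K → f x₀ ≤ f x

lemma EReal.eq_and_ne_bot_and_ne_top_of_add_eq_coe {a b b' : EReal} {r : ℝ}
    (h : a + b = r) (h' : a + b' = r) : b = b' ∧ b ≠ ⊥ ∧ b ≠ ⊤ := by
  induction a using EReal.rec <;> induction b using EReal.rec <;>
    induction b' using EReal.rec <;>
    simp_all [← EReal.coe_add, EReal.coe_eq_coe_iff]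
  linarith

section AugmentedLagrangian

variable {E F : Type*} {Q : Set E} {K : Set F} {f : E → EReal} {G : E → F} {x : E}

lemma PrimalOpt.eq_primalVal (hx : PrimalOpt Q K f G x) : f x = primalVal Q K f G :=
  le_antisymm (le_iInf₂ fun y hy => hx.2.2 y hy.1 hy.2) (iInf₂_le x ⟨hx.1, hx.2.1⟩)

lemma primalOpt_of_eq_primalVal (hxQ : x ∈ Q) (hxK : G x ∈ K)
    (hfx : f x = primalVal Q K f G) : PrimalOpt Q K f G x :=
  ⟨hxQ, hxK, fun y hyQ hyK => hfx ▸ iInf₂_le y ⟨hyQ, hyK⟩⟩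

variable [NormedAddCommGroup F] [NormedSpace ℝ F]
  {Λ : Set (F →L[ℝ] ℝ)} {Φ : F → (F →L[ℝ] ℝ) → ℝ → EReal} {l : F →L[ℝ] ℝ} {c c₁ c₂ : ℝ}

def PenaltyStrictMono (K : Set F) (Φ : F → (F →L[ℝ] ℝ) → ℝ → EReal) (l : F →L[ℝ] ℝ) :
    Prop :=
  ∀ y : F,
    (y ∉ K → ∀ c₁ c₂ : ℝ, 0 < c₁ → c₁ < c₂ →
      Φ y l c₁ ≠ ⊥ → Φ y l c₁ ≠ ⊤ → Φ y l c₂ ≠ ⊥ → Φ y l c₂ ≠ ⊤ →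
      Φ y l c₁ < Φ y l c₂) ∧
    (y ∈ K → ∀ c₁ c₂ : ℝ, 0 < c₁ → c₁ < c₂ →
      Φ y l c₁ ≠ ⊥ → Φ y l c₁ < 0 → Φ y l c₂ ≠ ⊥ → Φ y l c₂ < 0 →
      Φ y l c₁ < Φ y l c₂)

lemma theta_le_lagr (hx : x ∈ Q) : theta Q f G Φ l c ≤ lagr f G Φ x l c :=
  iInf₂_le x hx

lemma theta_eq_lagr_of_forall_le (hx : x ∈ Q)
    (hmin : ∀ x' ∈ Q, lagr f G Φ x l c ≤ lagr f G Φ x' l c) :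
    theta Q f G Φ l c = lagr f G Φ x l c :=
  le_antisymm (theta_le_lagr hx) (le_iInf₂ hmin)

lemma lagr_le_of_mem (hA1 : ∀ y ∈ K, ∀ l ∈ Λ, ∀ c : ℝ, 0 < c → Φ y l c ≤ 0)
    (hl : l ∈ Λ) (hc : 0 < c) (hxK : G x ∈ K) : lagr f G Φ x l c ≤ f x :=
  add_le_of_nonpos_right (hA1 (G x) hxK l hl c hc)

lemma lagr_mono (hA7 : ∀ y : F, ∀ l ∈ Λ, ∀ c₁ c₂ : ℝ, 0 < c₁ → c₁ ≤ c₂ → Φ y l c₁ ≤ Φ y l c₂)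
    (hl : l ∈ Λ) (hc₁ : 0 < c₁) (hc : c₁ ≤ c₂) :
    lagr f G Φ x l c₁ ≤ lagr f G Φ x l c₂ :=
  add_le_add le_rfl (hA7 (G x) l hl c₁ c₂ hc₁ hc)

lemma theta_le_primalVal (hA1 : ∀ y ∈ K, ∀ l ∈ Λ, ∀ c : ℝ, 0 < c → Φ y l c ≤ 0)
    (hl : l ∈ Λ) (hc : 0 < c) : theta Q f G Φ l c ≤ primalVal Q K f G :=
  le_iInf₂ fun _ hx => (theta_le_lagr hx.1).trans (lagr_le_of_mem hA1 hl hc hx.2)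

lemma theta_mono (hA7 : ∀ y : F, ∀ l ∈ Λ, ∀ c₁ c₂ : ℝ, 0 < c₁ → c₁ ≤ c₂ → Φ y l c₁ ≤ Φ y l c₂)
    (hl : l ∈ Λ) (hc₁ : 0 < c₁) (hc : c₁ ≤ c₂) :
    theta Q f G Φ l c₁ ≤ theta Q f G Φ l c₂ :=
  le_iInf₂ fun _ hx => (theta_le_lagr hx).trans (lagr_mono hA7 hl hc₁ hc)

lemma DualOpt.theta_eq_primalVal (hA1 : ∀ y ∈ K, ∀ l ∈ Λ, ∀ c : ℝ, 0 < c → Φ y l c ≤ 0)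
    {l₀ : F →L[ℝ] ℝ} (hl₀ : l₀ ∈ Λ) {c₀ : ℝ} (hc₀ : 0 < c₀)
    (hval : theta Q f G Φ l₀ c₀ = primalVal Q K f G) (h : DualOpt Q Λ f G Φ l c) :
    theta Q f G Φ l c = primalVal Q K f G :=
  le_antisymm (theta_le_primalVal hA1 h.1 h.2.1) (hval ▸ h.2.2 l₀ hl₀ c₀ hc₀)

lemma exists_theta_eq_primalVal_of_sInf_dualOpt_lt
    (hA1 : ∀ y ∈ K, ∀ l ∈ Λ, ∀ c : ℝ, 0 < c → Φ y l c ≤ 0)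
    (hA7 : ∀ y : F, ∀ l ∈ Λ, ∀ c₁ c₂ : ℝ, 0 < c₁ → c₁ ≤ c₂ → Φ y l c₁ ≤ Φ y l c₂)
    (hl : l ∈ Λ) {c₀ : ℝ} (hc₀ : 0 < c₀) (hval : theta Q f G Φ l c₀ = primalVal Q K f G)
    (hc : sInf {c' : ℝ | DualOpt Q Λ f G Φ l c'} < c) :
    ∃ c', 0 < c' ∧ c' < c ∧ theta Q f G Φ l c' = primalVal Q K f G ∧
      theta Q f G Φ l c = primalVal Q K f G := by
  have hc₀opt : DualOpt Q Λ f G Φ l c₀ :=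
    ⟨hl, hc₀, fun l' hl' c' hc' => hval ▸ theta_le_primalVal hA1 hl' hc'⟩
  obtain ⟨c', hc'opt, hc'c⟩ := exists_lt_of_csInf_lt ⟨c₀, hc₀opt⟩ hc
  have hθc' := hc'opt.theta_eq_primalVal hA1 hl hc₀ hval
  refine ⟨c', hc'opt.2.1, hc'c, hθc', le_antisymm ?_ ?_⟩
  · exact theta_le_primalVal hA1 hl (hc'opt.2.1.trans hc'c)
  · exact hθc' ▸ theta_mono hA7 hl hc'opt.2.1 hc'c.le

lemma PenaltyStrictMono.mem_and_eq_zero_of_eq (hstrict : PenaltyStrictMono K Φ l)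
    (hA1 : ∀ y ∈ K, ∀ l ∈ Λ, ∀ c : ℝ, 0 < c → Φ y l c ≤ 0) (hl : l ∈ Λ) {y : F} (hc₁ : 0 < c₁) (hc : c₁ < c₂)
    (heq : Φ y l c₁ = Φ y l c₂) (hbot : Φ y l c₁ ≠ ⊥) (htop : Φ y l c₁ ≠ ⊤) :
    y ∈ K ∧ Φ y l c₂ = 0 := by
  have hyK : y ∈ K := by
    by_contra hyK
    exact (hstrict y).1 hyK c₁ c₂ hc₁ hc hbot htop (heq ▸ hbot) (heq ▸ htop) |>.ne heq
  refine ⟨hyK, (hA1 y hyK l hl c₂ (hc₁.trans hc)).eq_of_not_lt fun hneg => ?_⟩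
  exact (hstrict y).2 hyK c₁ c₂ hc₁ hc hbot (heq ▸ hneg) (heq ▸ hbot) hneg |>.ne heq

lemma forall_lagr_le_of_primalOpt (hA1 : ∀ y ∈ K, ∀ l ∈ Λ, ∀ c : ℝ, 0 < c → Φ y l c ≤ 0)
    (hl : l ∈ Λ) (hc : 0 < c) (hθ : theta Q f G Φ l c = primalVal Q K f G)
    (hx : PrimalOpt Q K f G x) : ∀ x' ∈ Q, lagr f G Φ x l c ≤ lagr f G Φ x' l c :=
  fun _ hx' => calc
    lagr f G Φ x l c ≤ f x := lagr_le_of_mem hA1 hl hc hx.2.1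
    _ = theta Q f G Φ l c := hx.eq_primalVal.trans hθ.symm
    _ ≤ _ := theta_le_lagr hx'

lemma primalOpt_of_forall_lagr_le (hA1 : ∀ y ∈ K, ∀ l ∈ Λ, ∀ c : ℝ, 0 < c → Φ y l c ≤ 0)
    (hA7 : ∀ y : F, ∀ l ∈ Λ, ∀ c₁ c₂ : ℝ, 0 < c₁ → c₁ ≤ c₂ → Φ y l c₁ ≤ Φ y l c₂)
    (hstrict : PenaltyStrictMono K Φ l) (hl : l ∈ Λ) {r : ℝ}
    (hr : primalVal Q K f G = r) (hc₁ : 0 < c₁) (hc : c₁ < c₂)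
    (hθ₁ : theta Q f G Φ l c₁ = primalVal Q K f G)
    (hθ₂ : theta Q f G Φ l c₂ = primalVal Q K f G) (hx : x ∈ Q)
    (hmin : ∀ x' ∈ Q, lagr f G Φ x l c₂ ≤ lagr f G Φ x' l c₂) : PrimalOpt Q K f G x := by
  have hL₂ : lagr f G Φ x l c₂ = r := by
    rw [← theta_eq_lagr_of_forall_le hx hmin, hθ₂, hr]
  have hL₁ : lagr f G Φ x l c₁ = r := by
    refine le_antisymm (hL₂ ▸ lagr_mono hA7 hl hc₁ hc.le) ?_
    exact hr ▸ hθ₁ ▸ theta_le_lagr hx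
  obtain ⟨heq, hbot, htop⟩ := EReal.eq_and_ne_bot_and_ne_top_of_add_eq_coe hL₁ hL₂
  obtain ⟨hxK, hzero⟩ := hstrict.mem_and_eq_zero_of_eq hA1 hl hc₁ hc heq hbot htop
  refine primalOpt_of_eq_primalVal hx hxK ?_
  rw [hr, ← hL₂, lagr, hzero, add_zero]

end AugmentedLagrangian

theorem exact_penalty_representation_minimizers_general
    (Q : Set X) (K : Set Y) (Λ : Set (Y →L[ℝ] ℝ))
    (f : X → EReal) (G : X → Y) (Φ : Y → (Y →L[ℝ] ℝ) → ℝ → EReal)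
    (hfin : ∃ r : ℝ, primalVal Q K f G = (r : EReal))
    (hA1 : ∀ y ∈ K, ∀ l ∈ Λ, ∀ c : ℝ, 0 < c → Φ y l c ≤ 0)
    (hA7 : ∀ y : Y, ∀ l ∈ Λ, ∀ c₁ c₂ : ℝ, 0 < c₁ → c₁ ≤ c₂ → Φ y l c₁ ≤ Φ y l c₂)
    (l₀ : Y →L[ℝ] ℝ) (hl₀ : l₀ ∈ Λ) (c₀ : ℝ) (hc₀ : 0 < c₀)
    (hval : theta Q f G Φ l₀ c₀ = primalVal Q K f G)
    (hstrict : ∀ y : Y,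
      (y ∉ K → ∀ c₁ c₂ : ℝ, 0 < c₁ → c₁ < c₂ →
        Φ y l₀ c₁ ≠ ⊥ → Φ y l₀ c₁ ≠ ⊤ → Φ y l₀ c₂ ≠ ⊥ → Φ y l₀ c₂ ≠ ⊤ →
        Φ y l₀ c₁ < Φ y l₀ c₂) ∧
      (y ∈ K → ∀ c₁ c₂ : ℝ, 0 < c₁ → c₁ < c₂ →
        Φ y l₀ c₁ ≠ ⊥ → Φ y l₀ c₁ < 0 → Φ y l₀ c₂ ≠ ⊥ → Φ y l₀ c₂ < 0 →
        Φ y l₀ c₁ < Φ y l₀ c₂)) :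
    ∀ c : ℝ, sInf {c' : ℝ | DualOpt Q Λ f G Φ l₀ c'} < c →
      ∀ x ∈ Q, ((∀ x' ∈ Q, lagr f G Φ x l₀ c ≤ lagr f G Φ x' l₀ c) ↔
        PrimalOpt Q K f G x) := by
  intro c hc x hx
  obtain ⟨r, hr⟩ := hfin
  obtain ⟨c', hc'pos, hc'c, hθc', hθc⟩ :=
    exists_theta_eq_primalVal_of_sInf_dualOpt_lt hA1 hA7 hl₀ hc₀ hval hc
  exact ⟨primalOpt_of_forall_lagr_le hA1 hA7 hstrict hl₀ hr hc'pos hc'c hθc' hθc hx,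
    forall_lagr_le_of_primalOpt hA1 hl₀ (hc'pos.trans hc'c) hθc⟩

/-- Suppose `Θ(λ_*, c_*) = f_*` for some `λ_* ∈ Λ`, `c_* > 0`, axioms (A1)–(A3), (A7)
hold, the zero duality gap property holds, a primal globally optimal solution exists,
and `c ↦ Φ(y, λ_*, c)` is strictly increasing on its effective domain for `y ∉ K` and
on `{c : -∞ < Φ(y,λ_*,c) < 0}` for `y ∈ K`. Then for every `c` above the penalty map
value `c_*(λ_*)`, a point `x ∈ Q` minimizes `𝓛(·, λ_*, c)` over `Q` if and only if `x`
is a globally optimal solution of the primal problem. -/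
theorem exact_penalty_representation_minimizers
    (Q : Set X) (K : Set Y) (Λ : Set (Y →L[ℝ] ℝ))
    (f : X → EReal) (G : X → Y) (Φ : Y → (Y →L[ℝ] ℝ) → ℝ → EReal)
    (hQne : Q.Nonempty) (hQclosed : IsClosed Q)
    (hKclosed : IsClosed K) (hKconv : Convex ℝ K)
    (hKcone : ∀ y ∈ K, ∀ t : ℝ, 0 ≤ t → t • y ∈ K)
    (hfeas : {x ∈ Q | G x ∈ K}.Nonempty)
    (hfin : ∃ r : ℝ, primalVal Q K f G = (r : EReal))
    (hA1 : ∀ y ∈ K, ∀ l ∈ Λ, ∀ c : ℝ, 0 < c → Φ y l c ≤ 0)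
    (hA2 : ∀ y ∈ K, ∀ c : ℝ, 0 < c → ∃ l ∈ Λ, 0 ≤ Φ y l c)
    (hA3 : ∀ y ∉ K, ∀ c : ℝ, 0 < c → ∃ l ∈ Λ,
      Tendsto (fun t : ℝ => Φ y (t • l) c) atTop (𝓝 (⊤ : EReal)))
    (hA7 : ∀ y : Y, ∀ l ∈ Λ, ∀ c₁ c₂ : ℝ, 0 < c₁ → c₁ ≤ c₂ → Φ y l c₁ ≤ Φ y l c₂)
    (hgap : dualVal Q Λ f G Φ = primalVal Q K f G)
    (hprimal : ∃ x₀, PrimalOpt Q K f G x₀)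
    (l₀ : Y →L[ℝ] ℝ) (hl₀ : l₀ ∈ Λ) (c₀ : ℝ) (hc₀ : 0 < c₀)
    (hval : theta Q f G Φ l₀ c₀ = primalVal Q K f G)
    (hstrict : ∀ y : Y,
      (y ∉ K → ∀ c₁ c₂ : ℝ, 0 < c₁ → c₁ < c₂ →
        Φ y l₀ c₁ ≠ ⊥ → Φ y l₀ c₁ ≠ ⊤ → Φ y l₀ c₂ ≠ ⊥ → Φ y l₀ c₂ ≠ ⊤ →
        Φ y l₀ c₁ < Φ y l₀ c₂) ∧
      (y ∈ K → ∀ c₁ c₂ : ℝ, 0 < c₁ → c₁ < c₂ →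
        Φ y l₀ c₁ ≠ ⊥ → Φ y l₀ c₁ < 0 → Φ y l₀ c₂ ≠ ⊥ → Φ y l₀ c₂ < 0 →
        Φ y l₀ c₁ < Φ y l₀ c₂)) :
    ∀ c : ℝ, sInf {c' : ℝ | DualOpt Q Λ f G Φ l₀ c'} < c →
      ∀ x ∈ Q, ((∀ x' ∈ Q, lagr f G Φ x l₀ c ≤ lagr f G Φ x' l₀ c) ↔
        PrimalOpt Q K f G x) :=
  exact_penalty_representation_minimizers_general Q K Λ f G Φ hfin hA1 hA7 l₀ hl₀ c₀ hc₀ hval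
    hstrict
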